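/- arXiv:math/0404522 — 5 statements merged into one kernel-verified Lean document; each statement's English description precedes it below -/
import Mathlib

section
/- If V is a 2-dimensional ℂ-linear subspace of M₂(ℂ) such that the unital ℂ-subalgebra generated by V is all of M₂(ℂ), then the identity matrix 1 does not belong to V; consequently the span of {1} ∪ V is 3-dimensional. -/
/-! If `1 ∈ V` and `dim V = 2`, then `V = span {1, a}` for some `a`, so the algebra generated
by `V` is generated by the single element `a` and is therefore commutative. Since `M₂(ℂ)` is
not commutative, `1 ∉ V`, and adjoining `1` to `V` raises the dimension by one. -/

open Module Submodule Algebra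

theorem Submodule.exists_eq_span_pair_of_finrank_eq_two {K M : Type*} [DivisionRing K]
    [AddCommGroup M] [Module K M] [Module.Finite K M] {W : Submodule K M}
    (hW : finrank K W = 2) {x : M} (hxW : x ∈ W) (hx : x ≠ 0) : ∃ a, W = span K {x, a} := by
  have hW_not_le : ¬ W ≤ K ∙ x := fun hle => by
    have := finrank_mono hle
    rw [hW, finrank_span_singleton hx] at this
    omega
  obtain ⟨a, haW, ha⟩ := SetLike.not_le_iff_exists.mp hW_not_le
  refine ⟨a, (eq_of_le_of_finrank_le ?_ ?_).symm⟩
  · exact span_le.2 (Set.insert_subset hxW (Set.singleton_subset_iff.2 haW))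
  · rw [hW, span_insert, finrank_sup_span_singleton ha, finrank_span_singleton hx]

theorem Algebra.commute_of_mem_adjoin_of_one_mem_of_finrank_eq_two {K A : Type*} [Field K]
    [Ring A] [Algebra K A] [Nontrivial A] [Module.Finite K A] {V : Submodule K A}
    (hV : finrank K V = 2) (h1 : (1 : A) ∈ V) {x y : A}
    (hx : x ∈ adjoin K (V : Set A)) (hy : y ∈ adjoin K (V : Set A)) : Commute x y := by
  obtain ⟨a, rfl⟩ := V.exists_eq_span_pair_of_finrank_eq_two hV h1 one_ne_zero
  rw [adjoin_span, adjoin_insert_one] at hx hy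
  exact commute_of_mem_adjoin_singleton_of_commute hy (commute_of_mem_adjoin_self hx).symm

theorem Matrix.not_commute_single_single {n R : Type*} [DecidableEq n] [Fintype n]
    [Semiring R] [Nontrivial R] {i j : n} (hij : i ≠ j) :
    ¬ Commute (single i j (1 : R)) (single j i 1) := by
  intro h
  have := congr_fun₂ h.eq i i
  simp [hij] at this

/-- If `V` is a 2-dimensional `ℂ`-linear subspace of `M₂(ℂ)` generating it as a unital
`ℂ`-algebra, then the identity matrix `1` does not belong to `V`; consequently the span of
`{1} ∪ V` is 3-dimensional. -/
theorem one_not_mem_generating_two_dim_subspace (V : Submodule ℂ (Matrix (Fin 2) (Fin 2) ℂ))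
    (hdim : Module.finrank ℂ V = 2)
    (hV : Algebra.adjoin ℂ (V : Set (Matrix (Fin 2) (Fin 2) ℂ)) = ⊤) :
    (1 : Matrix (Fin 2) (Fin 2) ℂ) ∉ V ∧
      Module.finrank ℂ
        (Submodule.span ℂ ({1} ∪ (V : Set (Matrix (Fin 2) (Fin 2) ℂ)))) = 3 := by
  have h1 : (1 : Matrix (Fin 2) (Fin 2) ℂ) ∉ V := fun hmem =>
    Matrix.not_commute_single_single (R := ℂ) (by decide : (0 : Fin 2) ≠ 1) <|
      commute_of_mem_adjoin_of_one_mem_of_finrank_eq_two hdim hmem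
        (hV ▸ mem_top) (hV ▸ mem_top)
  refine ⟨h1, ?_⟩
  rw [span_union, span_eq, sup_comm, finrank_sup_span_singleton h1, hdim]
end

section
/- Let γ : FreeAlgebra ℂ (Fin 2) → M₂(ℂ) be the unique ℂ-algebra homomorphism from the free unital associative ℂ-algebra on two generators X₁, X₂ sending X₁ ↦ σ₁ = [[0,1],[1,0]] and X₂ ↦ σ₃ = [[1,0],[0,-1]]. Then the kernel of γ equals the two-sided ideal of FreeAlgebra ℂ (Fin 2) generated by the three elements X₁X₁ − 1, X₂X₂ − 1, and X₁X₂ + X₂X₁. (This is the exactness of the Clifford resolution of M₂(ℂ) at its middle term.) -/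
/-!
Modulo the three relations, right multiplication by either generator permutes `1, X₁, X₂, X₁X₂`
up to sign, so these four elements span the quotient algebra. Their images `1, σ₁, σ₃, σ₁σ₃` are
linearly independent, hence the map induced by `γ` on the quotient is injective.
-/

open FreeAlgebra

theorem Submodule.eq_top_of_one_mem_of_forall_mul_mem {R A : Type*} [CommSemiring R]
    [Semiring A] [Algebra R A] {s : Set A} (hs : Algebra.adjoin R s = ⊤) {N : Submodule R A}
    (h1 : 1 ∈ N) (hmul : ∀ n ∈ N, ∀ a ∈ s, n * a ∈ N) : N = ⊤ := by
  -- the elements `a` with `N * a ⊆ N` form a subalgebra containing `s`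
  have stable (a : A) : ∀ n ∈ N, n * a ∈ N := by
    have ha : a ∈ Algebra.adjoin R s := hs ▸ Algebra.mem_top
    induction ha using Algebra.adjoin_induction with
    | mem a ha => exact fun n hn ↦ hmul n hn a ha
    | algebraMap r =>
      intro n hn
      rw [← Algebra.commutes, ← Algebra.smul_def]
      exact N.smul_mem r hn
    | add a b _ _ ha hb =>
      intro n hn
      rw [mul_add]
      exact N.add_mem (ha n hn) (hb n hn)
    | mul a b _ _ ha hb =>
      intro n hn
      rw [← mul_assoc]
      exact hb _ (ha n hn)
  exact eq_top_iff.mpr fun a _ ↦ one_mul a ▸ stable a 1 h1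

theorem span_products_eq_top_of_anticommuting_involutions {R A : Type*} [CommRing R] [Ring A]
    [Algebra R A] {x y : A} (hxx : x * x = 1) (hyy : y * y = 1) (hxy : x * y + y * x = 0)
    (hgen : Algebra.adjoin R {x, y} = ⊤) :
    Submodule.span R (Set.range ![1, x, y, x * y]) = ⊤ := by
  set N := Submodule.span R (Set.range ![1, x, y, x * y])
  have mem (i : Fin 4) : ![1, x, y, x * y] i ∈ N := Submodule.subset_span ⟨i, rfl⟩
  have hyx : y * x = -(x * y) := eq_neg_of_add_eq_zero_right hxy
  have hxyx : x * y * x = -y := by rw [mul_assoc, hyx, mul_neg, ← mul_assoc, hxx, one_mul]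
  have hxyy : x * y * y = x := by rw [mul_assoc, hyy, mul_one]
  refine Submodule.eq_top_of_one_mem_of_forall_mul_mem hgen (mem 0) fun n hn a ha ↦ ?_
  suffices N ≤ N.comap (LinearMap.mulRight R a) from this hn
  refine Submodule.span_le.mpr (Set.range_subset_iff.mpr fun i ↦ ?_)
  rcases ha with ha | ha <;> subst a <;> fin_cases i
  all_goals
    simp only [Submodule.comap_coe, Set.mem_preimage, LinearMap.mulRight_apply, SetLike.mem_coe,
      Fin.zero_eta, Fin.mk_one, Fin.reduceFinMk, Matrix.cons_val, one_mul, neg_mem_iff, hxx, hyy,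
      hyx, hxyx, hxyy]
  all_goals first | exact mem 0 | exact mem 1 | exact mem 2 | exact mem 3

theorem Matrix.pauli_relations {R : Type*} [CommRing R] :
    !![0, 1; 1, 0] * !![0, 1; 1, 0] = (1 : Matrix (Fin 2) (Fin 2) R) ∧
      !![1, 0; 0, -1] * !![1, 0; 0, -1] = (1 : Matrix (Fin 2) (Fin 2) R) ∧
      !![0, 1; 1, 0] * !![1, 0; 0, -1] + !![1, 0; 0, -1] * !![0, 1; 1, 0] =
        (0 : Matrix (Fin 2) (Fin 2) R) := by
  simp [Matrix.one_fin_two, ← Matrix.ext_iff, Fin.forall_fin_two]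

theorem Matrix.linearIndependent_pauli {K : Type*} [Field K] [NeZero (2 : K)] :
    LinearIndependent K
      ![1, !![0, 1; 1, 0], !![1, 0; 0, -1], !![0, 1; 1, 0] * !![(1 : K), 0; 0, -1]] := by
  rw [Fintype.linearIndependent_iff]
  intro g hg
  have entry (i j : Fin 2) := congrFun₂ hg i j
  have h00 : g 0 + g 2 = 0 := by simpa [Fin.sum_univ_four, Matrix.one_fin_two] using entry 0 0
  have h01 : g 1 - g 3 = 0 := by
    simpa [Fin.sum_univ_four, Matrix.one_fin_two, sub_eq_add_neg] using entry 0 1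
  have h10 : g 1 + g 3 = 0 := by simpa [Fin.sum_univ_four, Matrix.one_fin_two] using entry 1 0
  have h11 : g 0 - g 2 = 0 := by
    simpa [Fin.sum_univ_four, Matrix.one_fin_two, sub_eq_add_neg] using entry 1 1
  have cancel_two {a b : K} (hab : a + b = 0) (hba : a - b = 0) : a = 0 ∧ b = 0 := by
    have ha : 2 * a = 0 := by linear_combination hab + hba
    have hb : 2 * b = 0 := by linear_combination hab - hba
    exact ⟨(mul_eq_zero.mp ha).resolve_left two_ne_zero,
      (mul_eq_zero.mp hb).resolve_left two_ne_zero⟩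
  obtain ⟨h0, h2⟩ := cancel_two h00 h11
  obtain ⟨h1, h3⟩ := cancel_two h10 h01
  intro i
  fin_cases i <;> assumption

theorem Algebra.adjoin_image_eq_top {R A B : Type*} [CommSemiring R] [Semiring A]
    [Algebra R A] [Semiring B] [Algebra R B] {f : A →ₐ[R] B} (hf : Function.Surjective f)
    {s : Set A} (hs : Algebra.adjoin R s = ⊤) : Algebra.adjoin R (f '' s) = ⊤ := by
  rw [Algebra.adjoin_image, hs, Algebra.map_top, (AlgHom.range_eq_top f).mpr hf]

theorem TwoSidedIdeal.ker_eq_of_linearIndependent {R A B ι : Type*} [CommRing R] [Ring A]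
    [Algebra R A] [Ring B] [Algebra R B] {f : A →ₐ[R] B} {J : TwoSidedIdeal A}
    (hJ : J ≤ ker f) {v : ι → A}
    (hspan : Submodule.span R (Set.range (Ideal.Quotient.mk J.asIdeal ∘ v)) = ⊤)
    (hli : LinearIndependent R (f ∘ v)) : ker f = J := by
  have hJ' (a : A) (ha : a ∈ J.asIdeal) : f a = 0 := (mem_ker f).mp (hJ (mem_asIdeal.mp ha))
  set f' := Ideal.Quotient.liftₐ J.asIdeal f hJ'
  have hinj : Function.Injective f' :=
    LinearMap.injective_of_linearIndependent (f := f'.toLinearMap) hspan hli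
  ext z
  rw [mem_ker, ← Ideal.Quotient.liftₐ_comp J.asIdeal f hJ', AlgHom.comp_apply,
    map_eq_zero_iff f' hinj, Ideal.Quotient.mkₐ_eq_mk, Ideal.Quotient.eq_zero_iff_mem,
    mem_asIdeal]

namespace FreeAlgebra

theorem adjoin_ι_fin_two_eq_top (R : Type*) [CommSemiring R] :
    Algebra.adjoin R {ι R (0 : Fin 2), ι R 1} = ⊤ := by
  rw [← adjoin_range_ι]
  congr
  ext
  simp [Fin.exists_fin_two, eq_comm]

variable (R : Type*) [CommRing R]

def cliffordRelations : TwoSidedIdeal (FreeAlgebra R (Fin 2)) :=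
  TwoSidedIdeal.span {ι R 0 * ι R 0 - 1, ι R 1 * ι R 1 - 1, ι R 0 * ι R 1 + ι R 1 * ι R 0}

theorem cliffordRelations_le_ker {A : Type*} [Ring A] [Algebra R A]
    (f : FreeAlgebra R (Fin 2) →ₐ[R] A) (h0 : f (ι R 0) * f (ι R 0) = 1)
    (h1 : f (ι R 1) * f (ι R 1) = 1)
    (h01 : f (ι R 0) * f (ι R 1) + f (ι R 1) * f (ι R 0) = 0) :
    cliffordRelations R ≤ TwoSidedIdeal.ker f := by
  refine TwoSidedIdeal.span_le.mpr ?_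
  rintro _ (rfl | rfl | rfl) <;>
    simp only [SetLike.mem_coe, TwoSidedIdeal.mem_ker, map_sub, map_add, map_mul, map_one,
      h0, h1, h01, sub_self]

theorem span_range_mk_cliffordRelations_eq_top :
    Submodule.span R (Set.range (Ideal.Quotient.mk (cliffordRelations R).asIdeal ∘
      ![1, ι R 0, ι R 1, ι R 0 * ι R 1])) = ⊤ := by
  set π := Ideal.Quotient.mkₐ R (cliffordRelations R).asIdeal
  have relation {a : FreeAlgebra R (Fin 2)}
      (ha : a ∈ ({ι R 0 * ι R 0 - 1, ι R 1 * ι R 1 - 1, ι R 0 * ι R 1 + ι R 1 * ι R 0} : Set _)) :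
      π a = 0 :=
    Ideal.Quotient.eq_zero_iff_mem.mpr <|
      TwoSidedIdeal.mem_asIdeal.mpr (TwoSidedIdeal.subset_span ha)
  have hxx : π (ι R 0) * π (ι R 0) = 1 := by
    rw [← sub_eq_zero, ← map_mul, ← map_one π, ← map_sub]
    exact relation (by simp)
  have hyy : π (ι R 1) * π (ι R 1) = 1 := by
    rw [← sub_eq_zero, ← map_mul, ← map_one π, ← map_sub]
    exact relation (by simp)
  have hxy : π (ι R 0) * π (ι R 1) + π (ι R 1) * π (ι R 0) = 0 := by
    rw [← map_mul, ← map_mul, ← map_add]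
    exact relation (by simp)
  have hgen : Algebra.adjoin R {π (ι R 0), π (ι R 1)} = ⊤ := by
    simpa [Set.image_insert_eq] using
      Algebra.adjoin_image_eq_top (Ideal.Quotient.mkₐ_surjective R _) (adjoin_ι_fin_two_eq_top R)
  have hfamily : Ideal.Quotient.mk (cliffordRelations R).asIdeal ∘
      ![1, ι R 0, ι R 1, ι R 0 * ι R 1] = ![1, π (ι R 0), π (ι R 1), π (ι R 0) * π (ι R 1)] := by
    ext i : 1
    fin_cases i <;> simp [π]
  rw [hfamily]
  exact span_products_eq_top_of_anticommuting_involutions hxx hyy hxy hgen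

end FreeAlgebra

/-- The kernel of the `ℂ`-algebra homomorphism `γ : FreeAlgebra ℂ (Fin 2) → M₂(ℂ)` sending
`X₁ ↦ σ₁` and `X₂ ↦ σ₃` equals the two-sided ideal generated by
`X₁X₁ − 1`, `X₂X₂ − 1` and `X₁X₂ + X₂X₁`. -/
theorem clifford_resolution_exact_middle :
    ∀ γ : FreeAlgebra ℂ (Fin 2) →ₐ[ℂ] Matrix (Fin 2) (Fin 2) ℂ,
      γ (FreeAlgebra.ι ℂ 0) = !![0, 1; 1, 0] →
      γ (FreeAlgebra.ι ℂ 1) = !![1, 0; 0, -1] →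
      TwoSidedIdeal.ker γ =
        TwoSidedIdeal.span
          { FreeAlgebra.ι ℂ (0 : Fin 2) * FreeAlgebra.ι ℂ (0 : Fin 2) - 1,
            FreeAlgebra.ι ℂ (1 : Fin 2) * FreeAlgebra.ι ℂ (1 : Fin 2) - 1,
            FreeAlgebra.ι ℂ (0 : Fin 2) * FreeAlgebra.ι ℂ (1 : Fin 2)
              + FreeAlgebra.ι ℂ (1 : Fin 2) * FreeAlgebra.ι ℂ (0 : Fin 2) } := by
  intro γ hX hY
  obtain ⟨hσ₁, hσ₃, hσ₁₃⟩ := Matrix.pauli_relations (R := ℂ)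
  have hfamily : γ ∘ ![1, ι ℂ 0, ι ℂ 1, ι ℂ 0 * ι ℂ 1] =
      ![1, !![0, 1; 1, 0], !![1, 0; 0, -1], !![0, 1; 1, 0] * !![1, 0; 0, -1]] := by
    ext i : 1
    fin_cases i <;> simp [hX, hY]
  refine TwoSidedIdeal.ker_eq_of_linearIndependent
    (cliffordRelations_le_ker ℂ γ (by rw [hX, hσ₁]) (by rw [hY, hσ₃]) (by rw [hX, hY, hσ₁₃]))
    (span_range_mk_cliffordRelations_eq_top ℂ) ?_
  rw [hfamily]
  exact Matrix.linearIndependent_pauli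
end

section
/- Fix m ≥ 1 and let Q be the quadratic form on ℂ^(2m) given by Q(x) = x₁² + ⋯ + x_{2m}². Then the Clifford algebra of Q over ℂ is isomorphic as a unital ℂ-algebra to the matrix algebra M_{2^m}(ℂ) of 2^m × 2^m complex matrices. (This is the exactness of the Clifford resolution of M_{2^m}(ℂ).) -/
/-!
On `(ℂ²)^{⊗m}`, realised as functions on `(ZMod 2)^m`, the Jordan–Wigner matrices
`γ_{2a} = Z_0 ⋯ Z_{a-1} X_a` and `γ_{2a+1} = i Z_0 ⋯ Z_{a-1} Z_a X_a` are `2m` pairwise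
anticommuting involutions, so `e_i ↦ γ_i` lifts to an algebra map from the Clifford algebra of
`x₁² + ⋯ + x_{2m}²`. Products of the `γ_i` give every Pauli string `Z^z X^x` up to a nonzero
scalar, because the exponent vectors `(x, z)` of the `γ_i` span `(ZMod 2)^{2m}`; and the Pauli
strings span all matrices by Fourier inversion on `(ZMod 2)^m`. So the map is onto, and it is
injective because both algebras have dimension `4^m` (the Clifford algebra is linearly
isomorphic to the exterior algebra).
-/

open Module in
theorem CliffordAlgebra.finrank_eq_two_pow {R M : Type*} [CommRing R] [StrongRankCondition R]
    [Invertible (2 : R)] [AddCommGroup M] [Module R M] [Module.Free R M] [Module.Finite R M]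
    (Q : QuadraticForm R M) :
    finrank R (CliffordAlgebra Q) = 2 ^ finrank R M := by
  rw [(CliffordAlgebra.equivExterior Q).finrank_eq,
    finrank_eq_card_basis (Module.finBasis R M).ExteriorAlgebra, Fintype.card_finset,
    Fintype.card_fin]

theorem sum_smul_mul_self_of_anticomm {R A I : Type*} [CommSemiring R] [Ring A] [Algebra R A]
    [Fintype I] (γ : I → A) (hsq : ∀ i, γ i * γ i = 1)
    (hanti : ∀ i j, i ≠ j → γ i * γ j = -(γ j * γ i)) (v : I → R) :
    (∑ i, v i • γ i) * (∑ i, v i • γ i) = algebraMap R A (∑ i, v i ^ 2) := by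
  classical
  have hoff : ∑ p ∈ Finset.univ.offDiag, v p.1 • γ p.1 * v p.2 • γ p.2 = 0 := by
    refine Finset.sum_involution (fun p _ => p.swap) (fun p hp => ?_) (fun p hp _ => ?_)
      (fun p hp => by simpa [and_comm, eq_comm] using hp) (fun p _ => rfl)
    · rw [Finset.mem_offDiag] at hp
      rw [Prod.fst_swap, Prod.snd_swap, smul_mul_smul_comm, smul_mul_smul_comm,
        hanti _ _ hp.2.2, mul_comm (v p.2), smul_neg, neg_add_cancel]
    · rw [Finset.mem_offDiag] at hp
      exact fun h => hp.2.2 (congrArg Prod.fst h).symm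
  rw [Finset.sum_mul_sum, ← Finset.sum_product', ← Finset.diag_union_offDiag,
    Finset.sum_union (Finset.disjoint_diag_offDiag _), hoff, add_zero, Finset.sum_diag]
  simp only [smul_mul_smul_comm, hsq, map_sum, Algebra.algebraMap_eq_smul_one, sq]

namespace CliffordAlgebra

variable {R A I : Type*} [CommRing R] [Ring A] [Algebra R A] [Fintype I]
  (Q : QuadraticForm R (I → R)) (hQ : ∀ x, Q x = ∑ i, x i ^ 2) (γ : I → A)
  (hsq : ∀ i, γ i * γ i = 1) (hanti : ∀ i j, i ≠ j → γ i * γ j = -(γ j * γ i))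

def liftOfAnticomm : CliffordAlgebra Q →ₐ[R] A :=
  lift Q ⟨Fintype.linearCombination R γ, fun v => by
    rw [Fintype.linearCombination_apply, hQ]
    exact sum_smul_mul_self_of_anticomm γ hsq hanti v⟩

lemma liftOfAnticomm_ι_single [DecidableEq I] (i : I) :
    liftOfAnticomm Q hQ γ hsq hanti (ι Q (Pi.single i 1)) = γ i := by
  rw [liftOfAnticomm, lift_ι_apply]
  exact (Fintype.linearCombination_apply_single R γ i 1).trans (one_smul R _)

end CliffordAlgebra

theorem Submodule.eq_top_of_single_mem_prod {K σ : Type*} [Ring K] [Finite σ] [DecidableEq σ]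
    (N : Submodule K ((σ → K) × (σ → K))) (hz : ∀ a, (0, Pi.single a 1) ∈ N)
    (hx : ∀ a, ∃ w, (Pi.single a 1, w) ∈ N) : N = ⊤ := by
  have hinr : ∀ z, ((0 : σ → K), z) ∈ N := by
    refine (Submodule.eq_top_iff' (p := N.comap (LinearMap.inr K _ _))).mp ?_
    rw [eq_top_iff, ← (Pi.basisFun K σ).span_eq, Submodule.span_le]
    rintro _ ⟨a, rfl⟩
    simpa using hz a
  have hinl : ∀ x, (x, (0 : σ → K)) ∈ N := by
    refine (Submodule.eq_top_iff' (p := N.comap (LinearMap.inl K _ _))).mp ?_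
    rw [eq_top_iff, ← (Pi.basisFun K σ).span_eq, Submodule.span_le]
    rintro _ ⟨a, rfl⟩
    obtain ⟨w, hw⟩ := hx a
    simpa using N.sub_mem hw (hinr w)
  refine Submodule.eq_top_iff'.mpr fun ⟨x, z⟩ => ?_
  simpa using N.add_mem (hinl x) (hinr z)

namespace Pauli

open Matrix

variable {σ : Type*} [Fintype σ]

noncomputable def sign : AddChar (ZMod 2) ℂ :=
  AddChar.zmodChar 2 (by norm_num : (-1 : ℂ) ^ 2 = 1)

@[simp] lemma sign_zero : sign 0 = 1 := AddChar.map_zero_eq_one _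

@[simp] lemma sign_one : sign 1 = -1 := by
  rw [sign, AddChar.zmodChar_apply, show (1 : ZMod 2).val = 1 from rfl, pow_one]

noncomputable def phase (z s : σ → ZMod 2) : ℂ := sign (z ⬝ᵥ s)

lemma phase_add_left (z z' s : σ → ZMod 2) : phase (z + z') s = phase z s * phase z' s := by
  rw [phase, add_dotProduct, AddChar.map_add_eq_mul]; rfl

lemma phase_add_right (z s s' : σ → ZMod 2) : phase z (s + s') = phase z s * phase z s' := by
  rw [phase, dotProduct_add, AddChar.map_add_eq_mul]; rfl

lemma phase_zero_left (s : σ → ZMod 2) : phase 0 s = 1 := by simp [phase]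

lemma phase_mul_self (z s : σ → ZMod 2) : phase z s * phase z s = 1 := by
  rw [← phase_add_right, ZModModule.add_self, phase, dotProduct_zero, sign_zero]

lemma phase_ne_zero (z s : σ → ZMod 2) : phase z s ≠ 0 :=
  left_ne_zero_of_mul_eq_one (phase_mul_self z s)

/-- The Pauli string `Z^z X^x`: row `s` has the single nonzero entry `(-1)^{z ⬝ s}`, in
column `s + x`. -/
noncomputable def pauli (x z : σ → ZMod 2) : Matrix (σ → ZMod 2) (σ → ZMod 2) ℂ :=
  Matrix.of fun s t => if t = s + x then phase z s else 0

lemma pauli_zero_zero : pauli (0 : σ → ZMod 2) 0 = 1 := by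
  ext s t
  simp [pauli, phase_zero_left, Matrix.one_apply, eq_comm]

variable [DecidableEq σ]

lemma phase_single (z : σ → ZMod 2) (a : σ) : phase z (Pi.single a 1) = sign (z a) := by
  rw [phase, dotProduct_single, mul_one]

lemma sum_phase (s : σ → ZMod 2) :
    ∑ z, phase z s = if s = 0 then 2 ^ Fintype.card σ else 0 := by
  split_ifs with hs
  · simp [hs, phase]
  obtain ⟨a, ha⟩ := Function.ne_iff.mp hs
  have hsa : s a = 1 := by generalize s a = c at ha; fin_cases c; exacts [absurd rfl ha, rfl]
  let ψ : AddChar (σ → ZMod 2) ℂ :=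
    sign.compAddMonoidHom (AddMonoidHom.mk' (· ⬝ᵥ s) fun z z' => add_dotProduct z z' s)
  refine AddChar.sum_eq_zero_iff_ne_zero.mpr
    ((AddChar.ne_zero_iff (ψ := ψ)).mpr ⟨(Pi.single a 1 : σ → ZMod 2), ?_⟩)
  change phase _ s ≠ 1
  rw [phase, dotProduct_comm, dotProduct_single, mul_one, hsa, sign_one]
  norm_num

lemma pauli_mul_pauli (x z x' z' : σ → ZMod 2) :
    pauli x z * pauli x' z' = phase z' x • pauli (x + x') (z + z') := by
  ext s t
  rw [Matrix.mul_apply, Fintype.sum_eq_single (s + x) fun u hu => by simp [pauli, hu]]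
  simp only [pauli, Matrix.of_apply, Matrix.smul_apply, if_true, add_assoc, phase_add_left,
    phase_add_right, smul_eq_mul]
  split_ifs <;> ring

lemma pauli_mul_self (x z : σ → ZMod 2) : pauli x z * pauli x z = phase z x • 1 := by
  rw [pauli_mul_pauli, ZModModule.add_self, ZModModule.add_self, pauli_zero_zero]

lemma pauli_mul_pauli_comm (x z x' z' : σ → ZMod 2) :
    pauli x z * pauli x' z' = (phase z' x * phase z x') • (pauli x' z' * pauli x z) := by
  rw [pauli_mul_pauli, pauli_mul_pauli, smul_smul, mul_assoc, phase_mul_self, mul_one,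
    add_comm x, add_comm z]

lemma single_eq_sum_pauli (s x : σ → ZMod 2) :
    Matrix.single s (s + x) (1 : ℂ) =
      (2 ^ Fintype.card σ : ℂ)⁻¹ • ∑ z, phase z s • pauli x z := by
  ext s' t'
  simp only [pauli, Matrix.smul_apply, Matrix.sum_apply, Matrix.of_apply, smul_eq_mul, mul_ite,
    mul_zero, Finset.sum_ite_irrel, Finset.sum_const_zero, ← phase_add_right, sum_phase,
    add_eq_zero_iff_eq_neg, ZModModule.neg_eq_self, Matrix.single_apply]
  by_cases hs : s = s' <;> by_cases ht : t' = s' + x <;> simp [hs, ht, eq_comm]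

lemma span_pauli :
    Submodule.span ℂ (Set.range fun v : (σ → ZMod 2) × (σ → ZMod 2) => pauli v.1 v.2) = ⊤ := by
  rw [eq_top_iff, ← (Matrix.stdBasis ℂ _ _).span_eq, Submodule.span_le]
  rintro _ ⟨⟨s, t⟩, rfl⟩
  obtain ⟨x, rfl⟩ : ∃ x, t = s + x :=
    ⟨s + t, by rw [← add_assoc, ZModModule.add_self, zero_add]⟩
  rw [Matrix.stdBasis_eq_single, single_eq_sum_pauli]
  exact Submodule.smul_mem _ _ <| Submodule.sum_mem _ fun z _ =>
    Submodule.smul_mem _ _ <| Submodule.subset_span ⟨(x, z), rfl⟩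

lemma eq_top_of_pauli_mem {S : Subalgebra ℂ (Matrix (σ → ZMod 2) (σ → ZMod 2) ℂ)}
    (h : ∀ x z, pauli x z ∈ S) : S = ⊤ := by
  refine Algebra.eq_top_iff.mpr fun M => ?_
  have hM : M ∈ Submodule.span ℂ _ := span_pauli (σ := σ) ▸ Submodule.mem_top
  exact (Submodule.span_le (p := Subalgebra.toSubmodule S)).mpr
    (by rintro _ ⟨v, rfl⟩; exact h v.1 v.2) hM

def exponents (S : Subalgebra ℂ (Matrix (σ → ZMod 2) (σ → ZMod 2) ℂ)) :
    Submodule (ZMod 2) ((σ → ZMod 2) × (σ → ZMod 2)) where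
  carrier := {v | pauli v.1 v.2 ∈ S}
  zero_mem' := by simp [pauli_zero_zero]
  add_mem' {v w} hv hw := by
    have hvw := S.smul_mem (S.mul_mem hv hw) (phase w.2 v.1)⁻¹
    rwa [pauli_mul_pauli, smul_smul, inv_mul_cancel₀ (phase_ne_zero _ _), one_smul] at hvw
  smul_mem' c v hv := by
    obtain rfl | rfl : c = 0 ∨ c = 1 := by fin_cases c; exacts [.inl rfl, .inr rfl]
    · simp [pauli_zero_zero]
    · simpa using hv

end Pauli

namespace JordanWigner

open Pauli

variable {m : ℕ}

def site (i : Fin (2 * m)) : Fin m := ⟨i / 2, by omega⟩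

def xPart (i : Fin (2 * m)) : Fin m → ZMod 2 := Pi.single (site i) 1

def zPart (i : Fin (2 * m)) : Fin m → ZMod 2 := fun a => if 2 * (a : ℕ) < i then 1 else 0

noncomputable def coeff (i : Fin (2 * m)) : ℂ := if (i : ℕ) % 2 = 1 then Complex.I else 1

noncomputable def gamma (i : Fin (2 * m)) : Matrix (Fin m → ZMod 2) (Fin m → ZMod 2) ℂ :=
  coeff i • pauli (xPart i) (zPart i)

lemma phase_zPart_xPart (i j : Fin (2 * m)) :
    phase (zPart j) (xPart i) = if 2 * ((i : ℕ) / 2) < j then -1 else 1 := by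
  rw [xPart, phase_single, zPart, site]
  split_ifs <;> simp

lemma gamma_mul_self (i : Fin (2 * m)) : gamma i * gamma i = 1 := by
  rw [gamma, smul_mul_smul_comm, pauli_mul_self, smul_smul, phase_zPart_xPart, coeff]
  split_ifs <;> first | omega | simp

lemma gamma_anticomm {i j : Fin (2 * m)} (hij : i ≠ j) :
    gamma i * gamma j = -(gamma j * gamma i) := by
  have hne : (i : ℕ) ≠ j := Fin.val_ne_of_ne hij
  rw [gamma, gamma, smul_mul_smul_comm, smul_mul_smul_comm, pauli_mul_pauli_comm,
    phase_zPart_xPart, phase_zPart_xPart, mul_comm (coeff j), smul_smul, ← neg_smul]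
  congr 1
  have hsigns : ((if 2 * ((i : ℕ) / 2) < j then -1 else 1) *
      if 2 * ((j : ℕ) / 2) < i then -1 else 1) = (-1 : ℂ) := by
    split_ifs <;> first | omega | simp
  rw [hsigns, mul_neg_one]

lemma span_exponents :
    Submodule.span (ZMod 2) (Set.range fun i : Fin (2 * m) => (xPart i, zPart i)) = ⊤ := by
  have mem : ∀ i, (xPart i, zPart i) ∈ Submodule.span (ZMod 2)
      (Set.range fun i : Fin (2 * m) => (xPart i, zPart i)) :=
    fun i => Submodule.subset_span ⟨i, rfl⟩
  have hx : ∀ (a : Fin m) (i : Fin (2 * m)), (i : ℕ) / 2 = a → xPart i = Pi.single a 1 :=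
    fun a i hi => by rw [xPart, show site i = a from Fin.ext hi]
  refine Submodule.eq_top_of_single_mem_prod _ (fun a => ?_)
    (fun a => ⟨_, hx a ⟨2 * a, by omega⟩ (by simp) ▸ mem ⟨2 * a, by omega⟩⟩)
  convert Submodule.add_mem _ (mem ⟨2 * a, by omega⟩) (mem ⟨2 * a + 1, by omega⟩) using 1
  rw [Prod.mk_add_mk, hx a _ (by simp), hx a _ (by simp; omega), ZModModule.add_self]
  congr 1
  ext b
  simp only [zPart, Pi.add_apply, Pi.single_apply, Fin.ext_iff]
  split_ifs <;> first | omega | rfl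

lemma eq_top_of_gamma_mem {S : Subalgebra ℂ (Matrix (Fin m → ZMod 2) (Fin m → ZMod 2) ℂ)}
    (h : ∀ i, gamma i ∈ S) : S = ⊤ := by
  have hpauli : ∀ i, pauli (xPart i) (zPart i) ∈ S := fun i => by
    have hc : coeff i ≠ 0 := by rw [coeff]; split_ifs <;> simp
    simpa [gamma, smul_smul, inv_mul_cancel₀ hc] using S.smul_mem (h i) (coeff i)⁻¹
  have hexp : exponents S = ⊤ := by
    rw [eq_top_iff, ← span_exponents, Submodule.span_le]
    rintro _ ⟨i, rfl⟩
    exact hpauli i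
  exact eq_top_of_pauli_mem fun x z => (hexp ▸ Submodule.mem_top : (x, z) ∈ exponents S)

end JordanWigner

theorem clifford_algebra_iso_matrix_general (m : ℕ)
    (Q : QuadraticForm ℂ (Fin (2 * m) → ℂ))
    (hQ : ∀ x, Q x = ∑ i, x i ^ 2) :
    Nonempty (CliffordAlgebra Q ≃ₐ[ℂ] Matrix (Fin (2 ^ m)) (Fin (2 ^ m)) ℂ) := by
  let φ := CliffordAlgebra.liftOfAnticomm Q hQ JordanWigner.gamma JordanWigner.gamma_mul_self
    fun _ _ => JordanWigner.gamma_anticomm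
  have hsurj : Function.Surjective φ := by
    rw [← AlgHom.range_eq_top]
    exact JordanWigner.eq_top_of_gamma_mem fun i =>
      ⟨_, CliffordAlgebra.liftOfAnticomm_ι_single Q hQ _ _ _ i⟩
  have hcard : Fintype.card (Fin m → ZMod 2) = 2 ^ m := by simp
  have hrank : Module.finrank ℂ (CliffordAlgebra Q) =
      Module.finrank ℂ (Matrix (Fin m → ZMod 2) (Fin m → ZMod 2) ℂ) := by
    rw [CliffordAlgebra.finrank_eq_two_pow, Module.finrank_matrix, Module.finrank_fin_fun,
      Module.finrank_self, hcard, mul_one, ← pow_add, two_mul]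
  have : FiniteDimensional ℂ (CliffordAlgebra Q) :=
    Module.finite_of_finrank_pos (by rw [CliffordAlgebra.finrank_eq_two_pow]; positivity)
  have hinj : Function.Injective φ :=
    (LinearMap.injective_iff_surjective_of_finrank_eq_finrank hrank (f := φ.toLinearMap)).mpr
      hsurj
  exact ⟨(AlgEquiv.ofBijective φ ⟨hinj, hsurj⟩).trans
    (Matrix.reindexAlgEquiv ℂ ℂ (Fintype.equivFinOfCardEq hcard))⟩

/-- For `m ≥ 1` and the quadratic form `Q(x) = x₁² + ⋯ + x_{2m}²` on `ℂ^(2m)`, the Clifford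
algebra of `Q` is isomorphic as a unital `ℂ`-algebra to `M_{2^m}(ℂ)`. -/
theorem clifford_algebra_iso_matrix (m : ℕ) (hm : 1 ≤ m)
    (Q : QuadraticForm ℂ (Fin (2 * m) → ℂ))
    (hQ : ∀ x, Q x = ∑ i, x i ^ 2) :
    Nonempty (CliffordAlgebra Q ≃ₐ[ℂ] Matrix (Fin (2 ^ m)) (Fin (2 ^ m)) ℂ) :=
  clifford_algebra_iso_matrix_general m Q hQ
end

section
/- Fix m ≥ 1. There exists a family e : Fin (2m) → M_{2^m}(ℂ) of 2m matrices satisfying the Clifford relations e_k e_l + e_l e_k = 2·δ_{kl}·1 for all k, l (where δ_{kl} is the Kronecker delta), such that the unital ℂ-subalgebra generated by the range of e is all of M_{2^m}(ℂ). -/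
/-!
Induction on `m`, starting from the empty family, which generates `M₁(ℂ) = ℂ`. The Pauli
matrices `X`, `Y` form a Clifford pair generating `M₂(ℂ)`, and `Z` squares to `1` and anticommutes
with both. Given a generating Clifford family `e` of `M_{2^m}(ℂ)`, the family
`Z ⊗ e_i, X ⊗ 1, Y ⊗ 1` in `M₂ ⊗ M_{2^m} ≅ M_{2^{m+1}}` is again Clifford. It generates: `X ⊗ 1`
and `Y ⊗ 1` give all of `M₂ ⊗ 1`, in particular `Z ⊗ 1`, and then `(Z ⊗ 1)(Z ⊗ e_i) = 1 ⊗ e_i`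
give `1 ⊗ M_{2^m}`.
-/

open Matrix Kronecker Algebra Set Function

variable {ι κ A : Type*}

structure IsCliffordFamily [Semiring A] (e : ι → A) : Prop where
  mul_self : ∀ k, e k * e k = 1
  anticomm : ∀ ⦃k l⦄, k ≠ l → e k * e l + e l * e k = 0

namespace IsCliffordFamily

variable [Semiring A] {e : ι → A}

theorem of_isEmpty [IsEmpty ι] (e : ι → A) : IsCliffordFamily e :=
  ⟨isEmptyElim, fun k => isEmptyElim k⟩

theorem comp (he : IsCliffordFamily e) {f : κ → ι} (hf : Injective f) :
    IsCliffordFamily (e ∘ f) :=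
  ⟨fun k => he.mul_self (f k), fun _ _ hkl => he.anticomm (hf.ne hkl)⟩

theorem map {B F : Type*} [Semiring B] [FunLike F A B] [RingHomClass F A B]
    (he : IsCliffordFamily e) (φ : F) : IsCliffordFamily (φ ∘ e) :=
  ⟨fun k => by simp only [Function.comp_apply, ← map_mul, he.mul_self, map_one],
    fun k l hkl => by
      simp only [Function.comp_apply, ← map_mul, ← map_add, he.anticomm hkl, map_zero]⟩

theorem mul_add_mul [DecidableEq ι] (he : IsCliffordFamily e) (k l : ι) :
    e k * e l + e l * e k = if k = l then 2 else 0 := by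
  split_ifs with hkl
  · rw [hkl, he.mul_self, one_add_one_eq_two]
  · exact he.anticomm hkl

end IsCliffordFamily

section Adjoin

variable {R B : Type*} [CommSemiring R] [Semiring A] [Semiring B] [Algebra R A] [Algebra R B]

theorem AlgHom.apply_mem_of_adjoin_eq_top (φ : A →ₐ[R] B) {s : Set A} (hs : adjoin R s = ⊤)
    {S : Subalgebra R B} (hφs : ∀ x ∈ s, φ x ∈ S) (a : A) : φ a ∈ S :=
  adjoin_le (S := S.comap φ) hφs (hs ▸ mem_top)

theorem Algebra.adjoin_range_comp_eq_top {e : ι → A} (he : adjoin R (range e) = ⊤)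
    (φ : A →ₐ[R] B) (hφ : Surjective φ) : adjoin R (range (φ ∘ e)) = ⊤ := by
  rw [range_comp, adjoin_image, he, Algebra.map_top, φ.range_eq_top.2 hφ]

end Adjoin

namespace Matrix

variable {R p q : Type*} [CommSemiring R] [Fintype p] [DecidableEq p] [Fintype q]
  [DecidableEq q]

theorem subalgebra_bot_eq_top [Unique p] : (⊥ : Subalgebra R (Matrix p p R)) = ⊤ := by
  rw [eq_comm, ← surjective_algebraMap_iff]
  intro M
  exact ⟨M default default, by
    ext i j; simp [algebraMap_matrix_apply, Subsingleton.elim i default,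
      Subsingleton.elim j default]⟩

theorem eq_top_of_kronecker_mem {S : Subalgebra R (Matrix (p × q) (p × q) R)}
    (hl : ∀ a : Matrix p p R, a ⊗ₖ (1 : Matrix q q R) ∈ S)
    (hr : ∀ b : Matrix q q R, (1 : Matrix p p R) ⊗ₖ b ∈ S) : S = ⊤ := by
  refine Algebra.eq_top_iff.2 fun x => ?_
  rw [← (kroneckerAlgEquiv p q R).apply_symm_apply x]
  induction (kroneckerAlgEquiv p q R).symm x using TensorProduct.induction_on with
  | zero => rw [map_zero]; exact S.zero_mem
  | tmul a b =>
    rw [kroneckerAlgEquiv_apply, kroneckerLinearEquiv_tmul, ← mul_one a, ← one_mul b,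
      mul_kronecker_mul]
    exact S.mul_mem (hl a) (hr b)
  | add x y hx hy => rw [map_add]; exact S.add_mem hx hy

theorem kronecker_one_mem_of_adjoin_eq_top {s : Set (Matrix p p R)} (hs : adjoin R s = ⊤)
    {S : Subalgebra R (Matrix (p × q) (p × q) R)} (h : ∀ a ∈ s, a ⊗ₖ (1 : Matrix q q R) ∈ S)
    (a : Matrix p p R) : a ⊗ₖ (1 : Matrix q q R) ∈ S := by
  have := ((kroneckerAlgEquiv p q R).toAlgHom.comp
    (TensorProduct.includeLeft (S := R) (B := Matrix q q R))).apply_mem_of_adjoin_eq_top hs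
    (S := S)
  simpa using this (by simpa using h) a

theorem one_kronecker_mem_of_adjoin_eq_top {t : Set (Matrix q q R)} (ht : adjoin R t = ⊤)
    {S : Subalgebra R (Matrix (p × q) (p × q) R)} (h : ∀ b ∈ t, (1 : Matrix p p R) ⊗ₖ b ∈ S)
    (b : Matrix q q R) : (1 : Matrix p p R) ⊗ₖ b ∈ S := by
  have := ((kroneckerAlgEquiv p q R).toAlgHom.comp
    (TensorProduct.includeRight (A := Matrix p p R))).apply_mem_of_adjoin_eq_top ht (S := S)
  simpa using this (by simpa using h) b

variable {z : Matrix p p R} {c : κ → Matrix p p R} {e : ι → Matrix q q R}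

/-- The graded tensor product of the family `e` with the family `c`, where `z` plays the role
of the grading operator. -/
def cliffordKronecker (z : Matrix p p R) (c : κ → Matrix p p R) (e : ι → Matrix q q R) :
    ι ⊕ κ → Matrix (p × q) (p × q) R :=
  Sum.elim (fun i => z ⊗ₖ e i) (fun j => c j ⊗ₖ 1)

theorem isCliffordFamily_cliffordKronecker (hz : z * z = 1)
    (hzc : ∀ j, z * c j + c j * z = 0) (hc : IsCliffordFamily c) (he : IsCliffordFamily e) :
    IsCliffordFamily (cliffordKronecker z c e) := by
  have mixed : ∀ i j, (z ⊗ₖ e i) * (c j ⊗ₖ 1) + (c j ⊗ₖ 1) * (z ⊗ₖ e i) = 0 := fun i j => by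
    rw [← mul_kronecker_mul, ← mul_kronecker_mul, mul_one, one_mul, ← add_kronecker, hzc,
      zero_kronecker]
  refine ⟨?_, ?_⟩
  · rintro (i | j) <;>
      simp only [cliffordKronecker, Sum.elim_inl, Sum.elim_inr, ← mul_kronecker_mul, hz,
        he.mul_self, hc.mul_self, mul_one, one_kronecker_one]
  · rintro (i | j) (i' | j') h <;> simp only [cliffordKronecker, Sum.elim_inl, Sum.elim_inr]
    · rw [← mul_kronecker_mul, ← mul_kronecker_mul, hz, ← kronecker_add,
        he.anticomm (fun hi => h (congrArg _ hi)), kronecker_zero]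
    · exact mixed i j'
    · rw [add_comm]; exact mixed i' j
    · rw [← mul_kronecker_mul, ← mul_kronecker_mul, mul_one, ← add_kronecker,
        hc.anticomm (fun hj => h (congrArg _ hj)), zero_kronecker]

theorem adjoin_range_cliffordKronecker (hz : z * z = 1) (hc : adjoin R (range c) = ⊤)
    (he : adjoin R (range e) = ⊤) : adjoin R (range (cliffordKronecker z c e)) = ⊤ := by
  set S := adjoin R (range (cliffordKronecker z c e))
  have hl : ∀ a : Matrix p p R, a ⊗ₖ (1 : Matrix q q R) ∈ S :=
    kronecker_one_mem_of_adjoin_eq_top hc <|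
      forall_mem_range.2 fun j => subset_adjoin ⟨.inr j, rfl⟩
  refine eq_top_of_kronecker_mem hl <| one_kronecker_mem_of_adjoin_eq_top he <|
    forall_mem_range.2 fun i => ?_
  have : (1 : Matrix p p R) ⊗ₖ e i = (z ⊗ₖ 1) * (z ⊗ₖ e i) := by
    rw [← mul_kronecker_mul, hz, one_mul]
  rw [this]
  exact S.mul_mem (hl z) (subset_adjoin ⟨.inl i, rfl⟩)

end Matrix

open Complex

def pauliX : Matrix (Fin 2) (Fin 2) ℂ := !![0, 1; 1, 0]

def pauliY : Matrix (Fin 2) (Fin 2) ℂ := !![0, -I; I, 0]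

def pauliZ : Matrix (Fin 2) (Fin 2) ℂ := !![1, 0; 0, -1]

theorem isCliffordFamily_pauliXY : IsCliffordFamily ![pauliX, pauliY] where
  mul_self k := by
    fin_cases k <;> ext i j <;> fin_cases i <;> fin_cases j <;> simp [pauliX, pauliY]
  anticomm k l h := by
    fin_cases k <;> fin_cases l <;> simp only [ne_eq, not_true_eq_false] at h <;>
      ext i j <;> fin_cases i <;> fin_cases j <;> simp [pauliX, pauliY]

theorem pauliZ_mul_self : pauliZ * pauliZ = 1 := by
  ext i j; fin_cases i <;> fin_cases j <;> simp [pauliZ]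

theorem pauliZ_anticomm (j : Fin 2) :
    pauliZ * ![pauliX, pauliY] j + ![pauliX, pauliY] j * pauliZ = 0 := by
  fin_cases j <;> ext i k <;> fin_cases i <;> fin_cases k <;> simp [pauliX, pauliY, pauliZ]

theorem eq_pauli_combination (M : Matrix (Fin 2) (Fin 2) ℂ) :
    M = ((M 0 0 + M 1 1) / 2) • 1 + ((M 0 1 + M 1 0) / 2) • pauliX
      + (I * (M 0 1 - M 1 0) / 2) • pauliY + (-I * (M 0 0 - M 1 1) / 2) • (pauliX * pauliY) := by
  ext i j
  fin_cases i <;> fin_cases j <;> simp [pauliX, pauliY] <;> ring_nf <;> simp only [I_sq] <;> ring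

theorem adjoin_pauliXY : adjoin ℂ (range ![pauliX, pauliY]) = ⊤ := by
  set S := adjoin ℂ (range ![pauliX, pauliY])
  have hX : pauliX ∈ S := subset_adjoin ⟨0, rfl⟩
  have hY : pauliY ∈ S := subset_adjoin ⟨1, rfl⟩
  refine Algebra.eq_top_iff.2 fun M => ?_
  rw [eq_pauli_combination M]
  exact S.add_mem (S.add_mem (S.add_mem (S.smul_mem S.one_mem _) (S.smul_mem hX _))
    (S.smul_mem hY _)) (S.smul_mem (S.mul_mem hX hY) _)

theorem exists_clifford_generators_matrix_general (m : ℕ) :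
    ∃ e : Fin (2 * m) → Matrix (Fin (2 ^ m)) (Fin (2 ^ m)) ℂ,
      (∀ k l, e k * e l + e l * e k =
        if k = l then (2 : ℂ) • (1 : Matrix (Fin (2 ^ m)) (Fin (2 ^ m)) ℂ) else 0) ∧
      Algebra.adjoin ℂ (Set.range e) = ⊤ := by
  suffices ∃ e : Fin (2 * m) → Matrix (Fin (2 ^ m)) (Fin (2 ^ m)) ℂ,
      IsCliffordFamily e ∧ adjoin ℂ (range e) = ⊤ by
    obtain ⟨e, he, hgen⟩ := this
    exact ⟨e, fun k l => by rw [he.mul_add_mul, two_smul, one_add_one_eq_two], hgen⟩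
  induction m with
  | zero =>
    have : IsEmpty (Fin (2 * 0)) := Fin.isEmpty'
    have : Unique (Fin (2 ^ 0)) := inferInstanceAs (Unique (Fin 1))
    refine ⟨finZeroElim, .of_isEmpty _, ?_⟩
    rw [range_eq_empty, adjoin_empty, subalgebra_bot_eq_top]
  | succ m ih =>
    obtain ⟨e, he, hgen⟩ := ih
    let σ : Fin (2 * (m + 1)) ≃ Fin (2 * m) ⊕ Fin 2 :=
      (finCongr (Nat.mul_succ 2 m)).trans finSumFinEquiv.symm
    let ψ := reindexAlgEquiv ℂ ℂ (finProdFinEquiv.trans (finCongr (pow_succ' 2 m).symm))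
    refine ⟨ψ ∘ cliffordKronecker pauliZ ![pauliX, pauliY] e ∘ σ, ?_,
      adjoin_range_comp_eq_top ?_ ψ.toAlgHom ψ.surjective⟩
    · exact ((isCliffordFamily_cliffordKronecker pauliZ_mul_self pauliZ_anticomm
        isCliffordFamily_pauliXY he).comp σ.injective).map ψ
    · rw [σ.surjective.range_comp]
      exact adjoin_range_cliffordKronecker pauliZ_mul_self adjoin_pauliXY hgen

/-- For `m ≥ 1` there is a family `e : Fin (2m) → M_{2^m}(ℂ)` of matrices satisfying the
Clifford relations `e_k e_l + e_l e_k = 2·δ_{kl}·1`, whose range generates `M_{2^m}(ℂ)` as a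
unital `ℂ`-algebra. -/
theorem exists_clifford_generators_matrix (m : ℕ) (hm : 1 ≤ m) :
    ∃ e : Fin (2 * m) → Matrix (Fin (2 ^ m)) (Fin (2 ^ m)) ℂ,
      (∀ k l, e k * e l + e l * e k =
        if k = l then (2 : ℂ) • (1 : Matrix (Fin (2 ^ m)) (Fin (2 ^ m)) ℂ) else 0) ∧
      Algebra.adjoin ℂ (Set.range e) = ⊤ :=
  exists_clifford_generators_matrix_general m
end

section
/- Let S be any subset of FreeAlgebra ℂ (Fin 2) contained in the ℂ-linear span of {1, X₁, X₂} (i.e., every element of S has word length at most 1), and let I be the two-sided ideal generated by S. Then the quotient algebra FreeAlgebra ℂ (Fin 2) / I is not isomorphic as a ℂ-algebra to M₂(ℂ). (Thus the relations in any presentation of M₂(ℂ) must have word length at least 2.) -/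
/-! If `1` lies in the linear span of `S`, the ideal is everything and the quotient is zero.
Otherwise some linear form `f` with `f 1 = 1` vanishes on `S`; the character of the free algebra
sending `Xᵢ` to `f Xᵢ` agrees with `f` on words of length at most one, so it kills `S` and
descends to the quotient. But `M₂(ℂ)` has no character: in a commutative target the matrix
units `Eᵢⱼ = Eᵢᵢ Eᵢⱼ` with `i ≠ j` map to `χ (Eᵢⱼ Eᵢᵢ) = 0`, hence so do `Eᵢᵢ = Eᵢⱼ Eⱼᵢ` and
`1 = ∑ Eᵢᵢ`. -/

theorem Matrix.subsingleton_of_ringHom {n R S : Type*} [Fintype n] [DecidableEq n]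
    [Nontrivial n] [Semiring R] [CommSemiring S] (χ : Matrix n n R →+* S) : Subsingleton S := by
  have off_diag : ∀ i j, i ≠ j → χ (single i j 1) = 0 := fun i j hij =>
    calc χ (single i j 1) = χ (single i i 1 * single i j 1) := by
          rw [single_mul_single_same, one_mul]
      _ = χ (single i j 1 * single i i 1) := by rw [map_mul, map_mul, mul_comm]
      _ = 0 := by rw [single_mul_single_of_ne (1 : R) i j i hij.symm, map_zero]
  have diag : ∀ i, χ (single i i 1) = 0 := fun i => by
    obtain ⟨j, hij⟩ := exists_ne i
    rw [← one_mul (1 : R), ← single_mul_single_same (1 : R) i j i, map_mul,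
      off_diag i j hij.symm, zero_mul]
  refine subsingleton_of_zero_eq_one ?_
  rw [← map_one χ, ← sum_single_one, map_sum, Finset.sum_eq_zero fun i _ => diag i]

theorem RingQuot.subsingleton_of_rel_one_zero {R : Type*} [Semiring R] {r : R → R → Prop}
    (h : r 1 0) : Subsingleton (RingQuot r) :=
  subsingleton_of_zero_eq_one <| by
    rw [← map_zero (mkRingHom r), ← map_one (mkRingHom r), mkRingHom_rel h]

theorem TwoSidedIdeal.mem_span_of_mem_submoduleSpan {R A : Type*} [CommSemiring R] [Ring A]
    [Algebra R A] {s : Set A} {x : A} (hx : x ∈ Submodule.span R s) : x ∈ span s :=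
  Submodule.span_le (p := (span s).asIdeal.restrictScalars R) |>.2 (fun _ hy => subset_span hy) hx

theorem TwoSidedIdeal.apply_eq_of_sub_mem_span {A B F : Type*} [Ring A] [Ring B] [FunLike F A B]
    [RingHomClass F A B] (φ : F) {s : Set A} (hs : ∀ x ∈ s, φ x = 0) {a b : A}
    (h : a - b ∈ span s) : φ a = φ b := by
  have h_ker : a - b ∈ ker φ := span_le.2 (fun x hx => (mem_ker φ).2 (hs x hx)) h
  rwa [mem_ker φ, map_sub, sub_eq_zero] at h_ker

theorem Submodule.exists_dual_eq_one_of_notMem {K V : Type*} [Field K] [AddCommGroup V]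
    [Module K V] {p : Submodule K V} {x : V} (hx : x ∉ p) :
    ∃ f : Module.Dual K V, f x = 1 ∧ p ≤ LinearMap.ker f := by
  obtain ⟨f, hfx, hfp⟩ := p.exists_dual_map_eq_bot_of_notMem hx inferInstance
  refine ⟨(f x)⁻¹ • f, by simp [hfx], fun y hy => ?_⟩
  have hfy : f y ∈ p.map f := mem_map_of_mem hy
  rw [hfp, mem_bot] at hfy
  simp [hfy]

theorem FreeAlgebra.lift_comp_ι_eqOn_span {R X : Type*} [CommSemiring R]
    (f : FreeAlgebra R X →ₗ[R] R) (hf : f 1 = 1) :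
    Set.EqOn (lift R (f ∘ ι R)) f
      (Submodule.span R (insert 1 (Set.range (ι R : X → FreeAlgebra R X)))) := by
  refine LinearMap.eqOn_span' (f := (lift R (f ∘ ι R)).toLinearMap) ?_
  rintro _ (rfl | ⟨i, rfl⟩)
  · simp [hf]
  · simp

/-- If `S` is a subset of `FreeAlgebra ℂ (Fin 2)` contained in the `ℂ`-linear span of
`{1, X₁, X₂}` (every element of `S` has word length at most 1), then the quotient of the free
algebra by the two-sided ideal generated by `S` is not isomorphic as a `ℂ`-algebra to
`M₂(ℂ)`. Here the quotient by the two-sided ideal `TwoSidedIdeal.span S` is realized as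
`RingQuot` of the relation `x ~ y ↔ x - y ∈ TwoSidedIdeal.span S`. -/
theorem quotient_by_wordlength_one_relations_ne_M2 (S : Set (FreeAlgebra ℂ (Fin 2)))
    (hS : S ⊆ (Submodule.span ℂ
      {(1 : FreeAlgebra ℂ (Fin 2)), FreeAlgebra.ι ℂ 0, FreeAlgebra.ι ℂ 1} :
        Submodule ℂ (FreeAlgebra ℂ (Fin 2)))) :
    IsEmpty
      (RingQuot (fun x y : FreeAlgebra ℂ (Fin 2) => x - y ∈ TwoSidedIdeal.span S)
        ≃ₐ[ℂ] Matrix (Fin 2) (Fin 2) ℂ) := by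
  refine ⟨fun e => ?_⟩
  by_cases h1 : (1 : FreeAlgebra ℂ (Fin 2)) ∈ Submodule.span ℂ S
  · have : Subsingleton (RingQuot fun x y : FreeAlgebra ℂ (Fin 2) =>
        x - y ∈ TwoSidedIdeal.span S) :=
      RingQuot.subsingleton_of_rel_one_zero
        (by simpa using TwoSidedIdeal.mem_span_of_mem_submoduleSpan h1)
    exact not_subsingleton (Matrix (Fin 2) (Fin 2) ℂ) e.symm.injective.subsingleton
  · obtain ⟨f, hf1, hSf⟩ := (Submodule.span ℂ S).exists_dual_eq_one_of_notMem h1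
    let φ := FreeAlgebra.lift ℂ (f ∘ FreeAlgebra.ι ℂ)
    have hφS : ∀ s ∈ S, φ s = 0 := fun s hs => by
      have h_span : s ∈ Submodule.span ℂ (insert 1 (Set.range (FreeAlgebra.ι ℂ))) :=
        Submodule.span_mono (Set.insert_subset_insert
          (Set.pair_subset (Set.mem_range_self 0) (Set.mem_range_self 1))) (hS hs)
      rw [FreeAlgebra.lift_comp_ι_eqOn_span f hf1 h_span]
      exact hSf (Submodule.subset_span hs)
    let ψ : RingQuot (fun x y : FreeAlgebra ℂ (Fin 2) => x - y ∈ TwoSidedIdeal.span S) →ₐ[ℂ] ℂ :=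
      RingQuot.liftAlgHom ℂ ⟨φ, fun _ _ => TwoSidedIdeal.apply_eq_of_sub_mem_span φ hφS⟩
    exact not_subsingleton ℂ
      (Matrix.subsingleton_of_ringHom (ψ.comp e.symm.toAlgHom).toRingHom)
end
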